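/- arXiv:1805.08196 — 4 statements merged into one kernel-verified Lean document; each statement's English description precedes it below -/
import Mathlib

section
/- (Gumbel-max identity) Let Y be a finite nonempty set, let s : Y → ℝ be a score function, let β > 0, and let (γ_y)_{y∈Y} be independent real random variables each distributed according to the Gumbel distribution with location 0 and scale β, i.e. with cumulative distribution function F(t) = exp(−exp(−t/β)). Then for every y₀ ∈ Y, the probability that s(y₀) + γ_{y₀} > s(y) + γ_y for all y ≠ y₀ (i.e. that y₀ is the unique maximizer of the perturbed scores) equals exp(s(y₀)/β) / ∑_{y∈Y} exp(s(y)/β). -/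
/-! Conditionally on `γ y₀ = t`, the event has probability `∏_{y ≠ y₀} F (s y₀ - s y + t)`, where
`F` is the Gumbel CDF. Since `F (c + t) = F t ^ exp (-c / β)`, this is `F t ^ a` with
`a = ∑_{y ≠ y₀} exp ((s y - s y₀) / β)`. As `F (γ y₀)` is uniform on `(0, 1]`, the probability is
`∫₀¹ v ^ a dv = 1 / (a + 1)`, which is the softmax weight of `y₀`. -/

open MeasureTheory ProbabilityTheory Real

open Set

lemma ProbabilityTheory.iIndepFun.measure_forall_ne_lt_eq_lintegral {Ω ι : Type*}
    [MeasurableSpace Ω] {μ : Measure Ω} [IsProbabilityMeasure μ] [Fintype ι] [DecidableEq ι]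
    {X : ι → Ω → ℝ} (hX : ∀ i, Measurable (X i)) (hindep : iIndepFun X μ) (j : ι)
    {f : ι → ℝ → ℝ} (hf : ∀ i, Measurable (f i)) :
    μ {ω | ∀ i ≠ j, X i ω < f i (X j ω)}
      = ∫⁻ t, ∏ i ∈ Finset.univ.erase j, μ {ω | X i ω < f i t} ∂(μ.map (X j)) := by
  set S := Finset.univ.erase j
  set V : Ω → S → ℝ := fun ω i => X i ω
  have hV : Measurable V := measurable_pi_lambda _ fun i => hX i
  have hjV : IndepFun (X j) V μ :=
    (hindep.indepFun_finset {j} S (by simp [S]) hX).comp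
      (measurable_pi_apply (⟨j, Finset.mem_singleton_self j⟩ : ({j} : Finset ι))) measurable_id
  set T : Set (ℝ × (S → ℝ)) := {p | ∀ i : S, p.2 i < f i p.1}
  have hT : MeasurableSet T := by
    simp only [T, ofPred_forall]
    exact .iInter fun i => measurableSet_lt (by fun_prop) ((hf i).comp measurable_fst)
  have hevent : {ω | ∀ i ≠ j, X i ω < f i (X j ω)} = (fun ω => (X j ω, V ω)) ⁻¹' T := by
    ext ω; simp [T, V, S]
  have hslice (t : ℝ) : μ.map V (Prod.mk t ⁻¹' T) = ∏ i ∈ S, μ {ω | X i ω < f i t} := by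
    have hpre : V ⁻¹' (Prod.mk t ⁻¹' T) = ⋂ i ∈ S, X i ⁻¹' Iio (f i t) := by
      ext ω; simp [T, V]
    rw [Measure.map_apply hV (measurable_prodMk_left hT), hpre,
      hindep.measure_inter_preimage_eq_mul S fun i _ => measurableSet_Iio]
    rfl
  rw [hevent, ← Measure.map_apply ((hX j).prodMk hV) hT,
    (indepFun_iff_map_prod_eq_prod_map_map (hX j).aemeasurable hV.aemeasurable).1 hjV,
    Measure.prod_apply hT]
  exact lintegral_congr hslice

lemma map_eq_volume_restrict_Ioc_of_cdf {F : ℝ → ℝ} (hF : StrictMono F)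
    (hrange : range F = Ioo 0 1) {ν : Measure ℝ} [IsProbabilityMeasure ν]
    (hν : ∀ t, ν (Iic t) = ENNReal.ofReal (F t)) : ν.map F = volume.restrict (Ioc 0 1) := by
  have hFm : Measurable F := hF.monotone.measurable
  have := Measure.isProbabilityMeasure_map (μ := ν) hFm.aemeasurable
  have : IsProbabilityMeasure (volume.restrict (Ioc (0 : ℝ) 1)) := ⟨by simp⟩
  have hF01 (t : ℝ) : F t ∈ Ioo 0 1 := hrange ▸ mem_range_self t
  refine Measure.ext_of_Iic _ _ fun u => ?_
  rw [Measure.map_apply hFm measurableSet_Iic, Measure.restrict_apply measurableSet_Iic]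
  rcases lt_or_ge u 1 with hu1 | hu1
  · rw [Iic_inter_Ioc_of_le hu1.le, Real.volume_Ioc, sub_zero]
    rcases le_or_gt u 0 with hu | hu
    · rw [eq_empty_of_forall_notMem (s := F ⁻¹' Iic u)
          fun t ht => (hF01 t).1.not_ge (ht.trans hu), ENNReal.ofReal_of_nonpos hu, measure_empty]
    · obtain ⟨t, rfl⟩ : u ∈ range F := hrange ▸ ⟨hu, hu1⟩
      rw [show F ⁻¹' Iic (F t) = Iic t from ext fun x => hF.le_iff_le, hν]
  · rw [eq_univ_of_forall (s := F ⁻¹' Iic u) fun t => (hF01 t).2.le.trans hu1,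
      inter_eq_right.2 (Ioc_subset_Iic_self.trans (Iic_subset_Iic.2 hu1))]
    simp

lemma measure_Iio_eq_of_cdf {F : ℝ → ℝ} (hF : StrictMono F) (hrange : range F = Ioo 0 1)
    {ν : Measure ℝ} [IsProbabilityMeasure ν] (hν : ∀ t, ν (Iic t) = ENNReal.ofReal (F t))
    (t : ℝ) : ν (Iio t) = ENNReal.ofReal (F t) := by
  have hF01 : F t ∈ Ioo 0 1 := hrange ▸ mem_range_self t
  rw [show Iio t = F ⁻¹' Iio (F t) from ext fun x => hF.lt_iff_lt.symm,
    ← Measure.map_apply hF.monotone.measurable measurableSet_Iio,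
    map_eq_volume_restrict_Ioc_of_cdf hF hrange hν, Measure.restrict_apply measurableSet_Iio,
    show Iio (F t) ∩ Ioc 0 1 = Ioo 0 (F t) by ext; grind, Real.volume_Ioo, sub_zero]

lemma setLIntegral_Ioc_rpow {a : ℝ} (ha : -1 < a) :
    ∫⁻ v in Ioc (0 : ℝ) 1, ENNReal.ofReal (v ^ a) = ENNReal.ofReal (1 / (a + 1)) := by
  have hint : IntegrableOn (fun v : ℝ => v ^ a) (Ioc 0 1) :=
    (intervalIntegrable_iff_integrableOn_Ioc_of_le zero_le_one).1
      (intervalIntegral.intervalIntegrable_rpow' ha)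
  rw [← ofReal_integral_eq_lintegral_ofReal hint
      ((ae_restrict_mem measurableSet_Ioc).mono fun v hv => rpow_nonneg hv.1.le a),
    ← intervalIntegral.integral_of_le zero_le_one, integral_rpow (Or.inl ha),
    one_rpow, zero_rpow (by linarith), sub_zero]

noncomputable def gumbelCDF (β t : ℝ) : ℝ := exp (-exp (-t / β))

lemma gumbelCDF_pos (β t : ℝ) : 0 < gumbelCDF β t := exp_pos _

lemma gumbelCDF_strictMono {β : ℝ} (hβ : 0 < β) : StrictMono (gumbelCDF β) := fun x y hxy => by
  unfold gumbelCDF; gcongr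

lemma range_gumbelCDF {β : ℝ} (hβ : 0 < β) : range (gumbelCDF β) = Ioo 0 1 := by
  refine Subset.antisymm (range_subset_iff.2 fun t =>
    ⟨exp_pos _, exp_lt_one_iff.2 (neg_neg_of_pos (exp_pos _))⟩) ?_
  rintro u ⟨hu0, hu1⟩
  refine ⟨-(β * log (-log u)), ?_⟩
  rw [gumbelCDF, neg_neg, mul_div_cancel_left₀ _ hβ.ne', exp_log (neg_pos.2 (log_neg hu0 hu1)),
    neg_neg, exp_log hu0]

lemma gumbelCDF_add (β c t : ℝ) : gumbelCDF β (c + t) = gumbelCDF β t ^ exp (-c / β) := by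
  rw [gumbelCDF, gumbelCDF, rpow_def_of_pos (exp_pos _), log_exp, neg_add, add_div, exp_add,
    mul_comm, neg_mul]

lemma sum_erase_exp_neg_sub_div_add_one {Y : Type*} [Fintype Y] [DecidableEq Y] (s : Y → ℝ)
    (β : ℝ) (y₀ : Y) :
    ∑ y ∈ Finset.univ.erase y₀, exp (-(s y₀ - s y) / β) + 1
      = (∑ y, exp (s y / β)) / exp (s y₀ / β) := by
  rw [Finset.sum_div, ← Finset.sum_erase_add _ _ (Finset.mem_univ y₀), div_self (exp_pos _).ne']
  congr 1
  refine Finset.sum_congr rfl fun y _ => ?_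
  rw [← exp_sub]
  congr 1
  ring

theorem gumbel_max_identity_general
    {Y : Type*} [Fintype Y]
    (s : Y → ℝ) (β : ℝ) (hβ : 0 < β)
    {Ω : Type*} [MeasurableSpace Ω] (μ : Measure Ω) [IsProbabilityMeasure μ]
    (γ : Y → Ω → ℝ)
    (hmeas : ∀ y, Measurable (γ y))
    (hindep : iIndepFun γ μ)
    (hcdf : ∀ y t, μ {ω | γ y ω ≤ t} = ENNReal.ofReal (exp (-exp (-t / β))))
    (y₀ : Y) :
    (μ {ω | ∀ y : Y, y ≠ y₀ → s y + γ y ω < s y₀ + γ y₀ ω}).toReal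
      = exp (s y₀ / β) / ∑ y : Y, exp (s y / β) := by
  classical
  have (y : Y) : IsProbabilityMeasure (μ.map (γ y)) :=
    Measure.isProbabilityMeasure_map (hmeas y).aemeasurable
  have hlaw (y : Y) (t : ℝ) : μ.map (γ y) (Iic t) = ENNReal.ofReal (gumbelCDF β t) := by
    rw [Measure.map_apply (hmeas y) measurableSet_Iic]
    exact hcdf y t
  have hlt (y : Y) (t : ℝ) : μ {ω | γ y ω < t} = ENNReal.ofReal (gumbelCDF β t) := by
    rw [← measure_Iio_eq_of_cdf (gumbelCDF_strictMono hβ) (range_gumbelCDF hβ) (hlaw y),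
      Measure.map_apply (hmeas y) measurableSet_Iio]
    rfl
  set a := ∑ y ∈ Finset.univ.erase y₀, exp (-(s y₀ - s y) / β)
  have hslice (t : ℝ) : ∏ y ∈ Finset.univ.erase y₀, μ {ω | γ y ω < s y₀ - s y + t}
      = ENNReal.ofReal (gumbelCDF β t ^ a) := by
    simp_rw [hlt, gumbelCDF_add]
    rw [← ENNReal.ofReal_prod_of_nonneg fun y _ => (rpow_pos_of_pos (gumbelCDF_pos β t) _).le,
      ← rpow_sum_of_pos (gumbelCDF_pos β t)]
  have hevent : {ω | ∀ y : Y, y ≠ y₀ → s y + γ y ω < s y₀ + γ y₀ ω}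
      = {ω | ∀ y ≠ y₀, γ y ω < s y₀ - s y + γ y₀ ω} := by
    ext ω
    refine forall₂_congr fun y _ => ?_
    constructor <;> intro h <;> linarith
  rw [hevent, hindep.measure_forall_ne_lt_eq_lintegral hmeas y₀ fun y => measurable_const_add _,
    lintegral_congr hslice, ← lintegral_map (f := fun v => ENNReal.ofReal (v ^ a)) (by fun_prop)
      (gumbelCDF_strictMono hβ).monotone.measurable,
    map_eq_volume_restrict_Ioc_of_cdf (gumbelCDF_strictMono hβ) (range_gumbelCDF hβ) (hlaw y₀),
    setLIntegral_Ioc_rpow (by linarith [show 0 ≤ a by positivity]),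
    ENNReal.toReal_ofReal (by positivity), sum_erase_exp_neg_sub_div_add_one, one_div_div]

/-- **Gumbel-max identity.** If each score `s y` is perturbed by independent
Gumbel(0, β) noise `γ y`, then the probability that `y₀` is the unique maximizer
of the perturbed scores equals the softmax probability of `y₀`. -/
theorem gumbel_max_identity
    {Y : Type*} [Fintype Y] [Nonempty Y]
    (s : Y → ℝ) (β : ℝ) (hβ : 0 < β)
    {Ω : Type*} [MeasurableSpace Ω] (μ : Measure Ω) [IsProbabilityMeasure μ]
    (γ : Y → Ω → ℝ)
    (hmeas : ∀ y, Measurable (γ y))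
    (hindep : iIndepFun γ μ)
    (hcdf : ∀ y t, μ {ω | γ y ω ≤ t} = ENNReal.ofReal (exp (-exp (-t / β))))
    (y₀ : Y) :
    (μ {ω | ∀ y : Y, y ≠ y₀ → s y + γ y ω < s y₀ + γ y₀ ω}).toReal
      = exp (s y₀ / β) / ∑ y : Y, exp (s y / β) :=
  gumbel_max_identity_general s β hβ μ γ hmeas hindep hcdf y₀
end

section
/- (Lemma 2: randomized loss lower bounds the CRF loss) For each i = 1,…,m let Y_i be a finite nonempty set, s_i : Y_i → ℝ a score function, β > 0, y_i ∈ Y_i an observed output, T_i ⊆ Y_i any subset, and T̃_i = T_i ∪ {y_i}. Write q_{i,A}(y) for the restricted softmax distribution on a nonempty subset A ⊆ Y_i. Then (1/m)∑_{i=1}^m (1 − q_{i,T̃_i}(y_i)) − (1/m)∑_{i=1}^m (1 − q_{i,Y_i}(y_i)) = −(1/m)∑_{i=1}^m q_{i,T̃_i}(y_i) · (∑_{y ∈ Y_i∖T̃_i} q_{i,Y_i}(y)) ≤ 0; that is, the randomized augmented loss L(w,S,T̃) is at most the full CRF loss L(w,S). -/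
open Real Finset

/-- The restricted softmax distribution on a subset `A` of outputs:
`q_A(y) = 1[y ∈ A] · exp(s(y)/β) / ∑_{y'∈A} exp(s(y')/β)`. -/
noncomputable def softmaxOn {Y : Type*} [DecidableEq Y]
    (s : Y → ℝ) (β : ℝ) (A : Finset Y) (y : Y) : ℝ :=
  (if y ∈ A then exp (s y / β) else 0) / ∑ y' ∈ A, exp (s y' / β)

/-! Restricting the softmax from `B` to `A ∋ y` rescales `q(y)` by `Z_B / Z_A`, where
`Z_B = Z_A + Z_{B∖A}` are the partition functions, so
`q_A(y) - q_B(y) = q_A(y) · Z_{B∖A} / Z_B = q_A(y) · q_B(B ∖ A)`. Averaging this identity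
over the examples gives the loss gap, which is `≤ 0` because every softmax value is
nonnegative. -/

section Softmax

variable {Y : Type*} [DecidableEq Y] (s : Y → ℝ) (β : ℝ)

lemma softmaxOn_nonneg (A : Finset Y) (y : Y) : 0 ≤ softmaxOn s β A y := by
  unfold softmaxOn
  positivity

lemma sum_softmaxOn_of_subset {A C : Finset Y} (hC : C ⊆ A) :
    ∑ y ∈ C, softmaxOn s β A y = (∑ y ∈ C, exp (s y / β)) / ∑ y ∈ A, exp (s y / β) := by
  rw [sum_div]
  exact sum_congr rfl fun y hy => by rw [softmaxOn, if_pos (hC hy)]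

lemma softmaxOn_sub_softmaxOn_of_subset {A B : Finset Y} {y : Y} (hy : y ∈ A) (hAB : A ⊆ B) :
    softmaxOn s β A y - softmaxOn s β B y
      = softmaxOn s β A y * ∑ y' ∈ B \ A, softmaxOn s β B y' := by
  have hZA : 0 < ∑ y' ∈ A, exp (s y' / β) := sum_pos (fun _ _ => exp_pos _) ⟨y, hy⟩
  have hZ_split : ∑ y' ∈ B, exp (s y' / β)
      = ∑ y' ∈ B \ A, exp (s y' / β) + ∑ y' ∈ A, exp (s y' / β) := (sum_sdiff hAB).symm
  rw [sum_softmaxOn_of_subset s β sdiff_subset, softmaxOn, softmaxOn, if_pos hy, if_pos (hAB hy),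
    hZ_split]
  have hZB : 0 < ∑ y' ∈ B \ A, exp (s y' / β) + ∑ y' ∈ A, exp (s y' / β) := by
    have := sum_nonneg fun y' (_ : y' ∈ B \ A) => (exp_pos (s y' / β)).le
    linarith
  field_simp
  ring

end Softmax

lemma mul_sum_one_sub_sub_mul_sum_one_sub {ι : Type*} (t : Finset ι) (c : ℝ) (f g : ι → ℝ) :
    c * ∑ i ∈ t, (1 - f i) - c * ∑ i ∈ t, (1 - g i) = -(c * ∑ i ∈ t, (f i - g i)) := by
  rw [← mul_sub, ← sum_sub_distrib, ← mul_neg, ← sum_neg_distrib]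
  congr 1
  exact sum_congr rfl fun i _ => by ring

theorem randomized_loss_lower_bounds_crf_loss_general
    (m : ℕ)
    (Y : Fin m → Type*) [∀ i, Fintype (Y i)] [∀ i, DecidableEq (Y i)]
    (s : ∀ i, Y i → ℝ) (β : ℝ)
    (yobs : ∀ i, Y i) (T : ∀ i, Finset (Y i)) :
    ((1 / (m : ℝ)) * ∑ i, (1 - softmaxOn (s i) β (insert (yobs i) (T i)) (yobs i)))
        - (1 / (m : ℝ)) * ∑ i, (1 - softmaxOn (s i) β Finset.univ (yobs i))
      = -((1 / (m : ℝ)) * ∑ i,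
            softmaxOn (s i) β (insert (yobs i) (T i)) (yobs i)
              * ∑ y ∈ Finset.univ \ insert (yobs i) (T i), softmaxOn (s i) β Finset.univ y)
    ∧ ((1 / (m : ℝ)) * ∑ i, (1 - softmaxOn (s i) β (insert (yobs i) (T i)) (yobs i)))
        - (1 / (m : ℝ)) * ∑ i, (1 - softmaxOn (s i) β Finset.univ (yobs i)) ≤ 0 := by
  rw [mul_sum_one_sub_sub_mul_sum_one_sub, sum_congr rfl fun i _ =>
    softmaxOn_sub_softmaxOn_of_subset (s i) β (mem_insert_self (yobs i) (T i)) (subset_univ _)]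
  refine ⟨rfl, neg_nonpos.mpr (mul_nonneg (by positivity) (sum_nonneg fun i _ => ?_))⟩
  exact mul_nonneg (softmaxOn_nonneg _ _ _ _) (sum_nonneg fun y _ => softmaxOn_nonneg _ _ _ _)

/-- **Lemma 2: the randomized augmented loss lower bounds the CRF loss.**
For each example `i` with output set `Y i`, score `s i`, observed output `yobs i`
and augmented subset `T̃ i = T i ∪ {yobs i}`, the difference between the
randomized augmented loss and the full CRF loss equals
`−(1/m)∑ᵢ q_{i,T̃ᵢ}(yᵢ) · ∑_{y ∈ Yᵢ∖T̃ᵢ} q_{i,Yᵢ}(y)`, which is `≤ 0`. -/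
theorem randomized_loss_lower_bounds_crf_loss
    (m : ℕ) (hm : 0 < m)
    (Y : Fin m → Type*) [∀ i, Fintype (Y i)] [∀ i, DecidableEq (Y i)]
    [∀ i, Nonempty (Y i)]
    (s : ∀ i, Y i → ℝ) (β : ℝ) (hβ : 0 < β)
    (yobs : ∀ i, Y i) (T : ∀ i, Finset (Y i)) :
    ((1 / (m : ℝ)) * ∑ i, (1 - softmaxOn (s i) β (insert (yobs i) (T i)) (yobs i)))
        - (1 / (m : ℝ)) * ∑ i, (1 - softmaxOn (s i) β Finset.univ (yobs i))
      = -((1 / (m : ℝ)) * ∑ i,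
            softmaxOn (s i) β (insert (yobs i) (T i)) (yobs i)
              * ∑ y ∈ Finset.univ \ insert (yobs i) (T i), softmaxOn (s i) β Finset.univ y)
    ∧ ((1 / (m : ℝ)) * ∑ i, (1 - softmaxOn (s i) β (insert (yobs i) (T i)) (yobs i)))
        - (1 / (m : ℝ)) * ∑ i, (1 - softmaxOn (s i) β Finset.univ (yobs i)) ≤ 0 :=
  randomized_loss_lower_bounds_crf_loss_general m Y s β yobs T
end

section
/- (Case I of Lemma 3: softmax concentration at a strict maximizer) Let Y be a finite set with |Y| = r ≥ 2, let s : Y → ℝ, and suppose y₀ ∈ Y satisfies s(y₀) > s(y) for all y ≠ y₀. Let g = s(y₀) − max_{y≠y₀} s(y) > 0, let m > 1 be such that (r−1)(√m − 1) > 1, and suppose the temperature satisfies 0 < β ≤ g / log((r−1)(√m−1)). Then 1 − q_Y(y₀) ≤ 1/√m, where q_Y(y₀) = exp(s(y₀)/β)/∑_{y∈Y} exp(s(y)/β). -/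
/-!
Every competitor `y ≠ y₀` scores at most `s y₀ - g`, so its weight `exp (s y / β)` is at most
`exp (-g / β)` times that of `y₀`, and the temperature bound makes `exp (-g / β) ≤ 1 / c` with
`c = (r - 1)(√m - 1)`. Summing over the `r - 1` competitors, the total competing weight `S` and
the weight `E` of `y₀` satisfy `(√m - 1) S ≤ E`, which is exactly `S / (E + S) ≤ 1 / √m`.
-/

open Real Finset

noncomputable def softmax {Y : Type*} [Fintype Y] (β : ℝ) (s : Y → ℝ) (y : Y) : ℝ :=
  exp (s y / β) / ∑ y', exp (s y' / β)

lemma one_sub_div_add_le_one_div_one_add {E S k : ℝ} (hE : 0 < E) (hS : 0 ≤ S) (hk : 0 ≤ k)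
    (h : k * S ≤ E) : 1 - E / (E + S) ≤ 1 / (1 + k) := by
  have hES : 0 < E + S := by positivity
  rw [one_sub_div hES.ne', add_sub_cancel_left, div_le_div_iff₀ hES (by positivity)]
  linarith

lemma mul_exp_neg_div_le_one {c g β : ℝ} (hc : 1 < c) (hβ : 0 < β) (h : β ≤ g / log c) :
    c * exp (-(g / β)) ≤ 1 := by
  have hlog : log c ≤ g / β := by
    rw [le_div_iff₀ hβ, mul_comm]
    exact (le_div_iff₀ (log_pos hc)).mp h
  calc c * exp (-(g / β)) = exp (log c - g / β) := by
        rw [sub_eq_add_neg, exp_add, exp_log (one_pos.trans hc)]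
    _ ≤ 1 := exp_le_one_iff.mpr (by linarith)

section Softmax

variable {Y : Type*} [Fintype Y] [DecidableEq Y] {s : Y → ℝ} {β g : ℝ} {y₀ : Y}

lemma sum_erase_exp_div_le_of_gap (hβ : 0 < β) (hgap : ∀ y ≠ y₀, s y ≤ s y₀ - g) :
    ∑ y ∈ univ.erase y₀, exp (s y / β)
      ≤ ((Fintype.card Y : ℝ) - 1) * exp (-(g / β)) * exp (s y₀ / β) := by
  have hterm : ∀ y ∈ univ.erase y₀, exp (s y / β) ≤ exp (-(g / β)) * exp (s y₀ / β) := by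
    intro y hy
    rw [← exp_add, exp_le_exp, show -(g / β) + s y₀ / β = (s y₀ - g) / β by ring]
    exact div_le_div_of_nonneg_right (hgap y (ne_of_mem_erase hy)) hβ.le
  calc ∑ y ∈ univ.erase y₀, exp (s y / β)
      ≤ #(univ.erase y₀) • (exp (-(g / β)) * exp (s y₀ / β)) := sum_le_card_nsmul _ _ _ hterm
    _ = ((Fintype.card Y : ℝ) - 1) * exp (-(g / β)) * exp (s y₀ / β) := by
      rw [nsmul_eq_mul, cast_card_erase_of_mem (mem_univ y₀), card_univ, mul_assoc]

theorem one_sub_softmax_le_of_gap (hβ : 0 < β) (hgap : ∀ y ≠ y₀, s y ≤ s y₀ - g) {k : ℝ}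
    (hk : 0 ≤ k) (hdecay : ((Fintype.card Y : ℝ) - 1) * k * exp (-(g / β)) ≤ 1) :
    1 - softmax β s y₀ ≤ 1 / (1 + k) := by
  set S := ∑ y ∈ univ.erase y₀, exp (s y / β)
  have hsum : ∑ y, exp (s y / β) = exp (s y₀ / β) + S := (add_sum_erase _ _ (mem_univ y₀)).symm
  have hS : 0 ≤ S := sum_nonneg fun y _ => (exp_pos _).le
  rw [softmax, hsum]
  refine one_sub_div_add_le_one_div_one_add (exp_pos _) hS hk ?_
  calc k * S ≤ k * (((Fintype.card Y : ℝ) - 1) * exp (-(g / β)) * exp (s y₀ / β)) :=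
        mul_le_mul_of_nonneg_left (sum_erase_exp_div_le_of_gap hβ hgap) hk
    _ = ((Fintype.card Y : ℝ) - 1) * k * exp (-(g / β)) * exp (s y₀ / β) := by ring
    _ ≤ exp (s y₀ / β) := mul_le_of_le_one_left (exp_pos _).le hdecay

end Softmax

/-- **Case I of Lemma 3: softmax concentration at a strict maximizer.**
If `y₀` strictly maximizes the scores with gap `g`, and the temperature satisfies
`β ≤ g / log((r−1)(√m−1))`, then the softmax distribution puts mass at least
`1 − 1/√m` on `y₀`. -/
theorem softmax_concentration_at_strict_maximizer
    {Y : Type*} [Fintype Y] [DecidableEq Y]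
    (r : ℕ) (hr : 2 ≤ r) (hcard : Fintype.card Y = r)
    (s : Y → ℝ) (y₀ : Y)
    (g : ℝ)
    (hg : g = s y₀ - (Finset.univ.erase y₀).sup' (by
      rw [← Finset.card_pos, Finset.card_erase_of_mem (Finset.mem_univ _),
        Finset.card_univ, hcard]; omega) s)
    (m : ℝ)
    (hrm : 1 < ((r : ℝ) - 1) * (Real.sqrt m - 1))
    (β : ℝ) (hβ : 0 < β)
    (hβle : β ≤ g / Real.log (((r : ℝ) - 1) * (Real.sqrt m - 1))) :
    1 - exp (s y₀ / β) / ∑ y : Y, exp (s y / β) ≤ 1 / Real.sqrt m := by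
  have hgap : ∀ y ≠ y₀, s y ≤ s y₀ - g := fun y hy => by
    rw [hg, sub_sub_cancel]
    exact le_sup' s (mem_erase.2 ⟨hy, mem_univ y⟩)
  have hr1 : (0 : ℝ) ≤ (r : ℝ) - 1 := by
    rw [sub_nonneg, Nat.one_le_cast]; omega
  have hsqrt : 0 ≤ √m - 1 := (pos_of_mul_pos_right (one_pos.trans hrm) hr1).le
  have hdecay := mul_exp_neg_div_le_one hrm hβ hβle
  simpa only [softmax, add_sub_cancel] using
    one_sub_softmax_le_of_gap hβ hgap hsqrt (by rwa [hcard])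
end

section
/- (Case II of Lemma 3: expected restricted-softmax probability of a dominated output) Fix an input x with finite output set Y, feature map φ(x,·) : Y → ℝ^d, weight vector w ≠ 0, observed output y₀ ∈ Y, and temperature 0 < β ≤ ‖w‖₁/log m with m > 1. Let T be a random set of n ≥ m^{0.5−c} outputs from Y∖{y₀} (for some c ∈ [0,1]) such that, with probability at least 1 − ‖w‖₁/√m, the average score satisfies (1/n)∑_{y∈T} ⟨φ(x,y), w⟩ ≥ ⟨φ(x,y₀), w⟩ + c‖w‖₁. Then E_T[ q_{T∪{y₀}}(y₀) ] ≤ 1/(1 + √m) + ‖w‖₁/√m, where q_{T∪{y₀}}(y₀) = exp(⟨φ(x,y₀),w⟩/β)/∑_{y∈T∪{y₀}} exp(⟨φ(x,y),w⟩/β). -/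
open Real MeasureTheory Finset

/-!
On the event where the average score of `T` beats the score of `y₀` by `c‖w‖₁`, Jensen's
inequality for `exp` gives `∑_{y ∈ T} exp(s y / β) ≥ n · exp((s y₀ + c‖w‖₁)/β)`, and
`β ≤ ‖w‖₁ / log m` turns `exp(c‖w‖₁/β)` into at least `m^c`; with `n ≥ m^{1/2 - c}`
the other outputs outweigh `y₀` by a factor `√m`, so `q(y₀) ≤ 1/(1 + √m)`.
Off that event `q(y₀) ≤ 1`, and the event fails with probability at most `‖w‖₁/√m`.
-/

/-- `q_A(y)` without the factor `1[y ∈ A]`: it is only ever evaluated at points of `A`. -/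
noncomputable def restrictedSoftmax {Y : Type*} (s : Y → ℝ) (β : ℝ) (A : Finset Y) (y : Y) :
    ℝ :=
  exp (s y / β) / ∑ y' ∈ A, exp (s y' / β)

section RestrictedSoftmax

variable {Y : Type*} {s : Y → ℝ} {β : ℝ} {A : Finset Y} {y : Y}

theorem restrictedSoftmax_nonneg : 0 ≤ restrictedSoftmax s β A y := by
  unfold restrictedSoftmax
  positivity

theorem restrictedSoftmax_le_one (hy : y ∈ A) : restrictedSoftmax s β A y ≤ 1 :=
  div_le_one_of_le₀
    (single_le_sum (f := fun y' => exp (s y' / β)) (fun _ _ => (exp_pos _).le) hy)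
    (sum_nonneg fun _ _ => (exp_pos _).le)

theorem restrictedSoftmax_insert_le_one_div_one_add [DecidableEq Y] {K : ℝ} (hy : y ∉ A)
    (hK : 0 ≤ K) (hA : K * exp (s y / β) ≤ ∑ y' ∈ A, exp (s y' / β)) :
    restrictedSoftmax s β (insert y A) y ≤ 1 / (1 + K) := by
  have hy_pos := exp_pos (s y / β)
  rw [restrictedSoftmax, sum_insert hy, div_le_div_iff₀ (by positivity) (by positivity)]
  linarith

end RestrictedSoftmax

theorem card_mul_exp_mean_le_sum_exp {ι : Type*} (t : Finset ι) (f : ι → ℝ) :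
    (#t : ℝ) * exp ((∑ i ∈ t, f i) / #t) ≤ ∑ i ∈ t, exp (f i) := by
  rcases t.eq_empty_or_nonempty with rfl | ht
  · simp
  have hcard : (0 : ℝ) < #t := by exact_mod_cast ht.card_pos
  have hjensen := convexOn_exp.map_sum_le (t := t) (w := fun _ => 1 / (#t : ℝ)) (p := f)
    (fun _ _ => by positivity) (by simp [hcard.ne']) (fun _ _ => Set.mem_univ _)
  simp only [smul_eq_mul, one_div_mul_eq_div, ← sum_div] at hjensen
  rwa [le_div_iff₀' hcard] at hjensen

theorem rpow_le_exp_mul_div {m β L c : ℝ} (hm : 1 < m) (hβ : 0 < β) (hβL : β ≤ L / log m)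
    (hc : 0 ≤ c) : m ^ c ≤ exp (c * L / β) := by
  have hlog : log m ≤ L / β := by
    rw [le_div_iff₀ hβ, mul_comm]
    exact (le_div_iff₀ (log_pos hm)).mp hβL
  rw [rpow_def_of_pos (by linarith), exp_le_exp, mul_div_assoc, mul_comm]
  exact mul_le_mul_of_nonneg_left hlog hc

theorem restrictedSoftmax_le_of_mean_ge {Y : Type*} [DecidableEq Y] {s : Y → ℝ}
    {A : Finset Y} {y₀ : Y} {β L m c : ℝ} (hy₀ : y₀ ∉ A) (hm : 1 < m) (hβ : 0 < β)
    (hβL : β ≤ L / log m) (hc : 0 ≤ c) (hA : m ^ ((0.5 : ℝ) - c) ≤ #A)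
    (hmean : s y₀ + c * L ≤ (∑ y ∈ A, s y) / #A) :
    restrictedSoftmax s β (insert y₀ A) y₀ ≤ 1 / (1 + √m) := by
  have hm0 : 0 < m := by linarith
  refine restrictedSoftmax_insert_le_one_div_one_add hy₀ (sqrt_nonneg m) ?_
  have hsqrt : √m = m ^ ((0.5 : ℝ) - c) * m ^ c := by
    rw [← rpow_add hm0, sub_add_cancel, sqrt_eq_rpow]
    norm_num
  have hmean_div : (s y₀ + c * L) / β ≤ (∑ y ∈ A, s y / β) / #A := by
    rw [← sum_div, div_right_comm]
    exact div_le_div_of_nonneg_right hmean hβ.le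
  calc √m * exp (s y₀ / β)
      ≤ #A * exp (c * L / β) * exp (s y₀ / β) := by
        rw [hsqrt]
        gcongr
        exact rpow_le_exp_mul_div hm hβ hβL hc
    _ = #A * exp ((s y₀ + c * L) / β) := by rw [mul_assoc, ← exp_add, add_div, add_comm]
    _ ≤ #A * exp ((∑ y ∈ A, s y / β) / #A) := by gcongr
    _ ≤ ∑ y ∈ A, exp (s y / β) := card_mul_exp_mean_le_sum_exp A _

theorem MeasureTheory.measure_compl_le_ofReal {Ω : Type*} [MeasurableSpace Ω] {μ : Measure Ω}
    [IsProbabilityMeasure μ] {S : Set Ω} {ε : ℝ} (hS : MeasurableSet S)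
    (hμS : ENNReal.ofReal (1 - ε) ≤ μ S) : μ Sᶜ ≤ ENNReal.ofReal ε := by
  rw [prob_compl_eq_one_sub hS, tsub_le_iff_right]
  calc (1 : ENNReal) = ENNReal.ofReal (ε + (1 - ε)) := by simp
    _ ≤ ENNReal.ofReal ε + ENNReal.ofReal (1 - ε) := ENNReal.ofReal_add_le
    _ ≤ ENNReal.ofReal ε + μ S := by gcongr

theorem MeasureTheory.integral_le_add_of_le_on_of_measure_ge {Ω : Type*} [MeasurableSpace Ω]
    {μ : Measure Ω} [IsProbabilityMeasure μ] {q : Ω → ℝ} {E : Set Ω} {a ε : ℝ}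
    (hq : Measurable q) (hq0 : ∀ ω, 0 ≤ q ω) (hq1 : ∀ ω, q ω ≤ 1) (ha : 0 ≤ a)
    (hε : 0 ≤ ε) (hE : ∀ ω ∈ E, q ω ≤ a) (hμE : ENNReal.ofReal (1 - ε) ≤ μ E) :
    ∫ ω, q ω ∂μ ≤ a + ε := by
  set S := {ω | q ω ≤ a}
  have hS : MeasurableSet S := measurableSet_le hq measurable_const
  have hq_int : Integrable q μ :=
    (integrable_const (1 : ℝ)).mono' hq.aestronglyMeasurable
      (ae_of_all _ fun ω => by rw [norm_of_nonneg (hq0 ω)]; exact hq1 ω)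
  have hbound : ∀ ω, q ω ≤ a + Sᶜ.indicator (fun _ => 1) ω := by
    intro ω
    by_cases hω : ω ∈ S
    · rw [Set.indicator_of_notMem (Set.notMem_compl_iff.mpr hω)]
      linarith [show q ω ≤ a from hω]
    · rw [Set.indicator_of_mem (Set.mem_compl hω)]
      linarith [hq1 ω]
  have hind_int : Integrable (Sᶜ.indicator fun _ => (1 : ℝ)) μ :=
    (integrable_const 1).indicator hS.compl
  have hμSc : μ.real Sᶜ ≤ ε :=
    ENNReal.toReal_le_of_le_ofReal hε
      (measure_compl_le_ofReal hS (hμE.trans (measure_mono hE)))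
  calc ∫ ω, q ω ∂μ ≤ ∫ ω, (a + Sᶜ.indicator (fun _ => 1) ω) ∂μ :=
        integral_mono hq_int ((integrable_const a).add hind_int) hbound
    _ = a + μ.real Sᶜ := by
        rw [integral_add (integrable_const a) hind_int, integral_indicator_const _ hS.compl]
        simp
    _ ≤ a + ε := by linarith

theorem expected_restricted_softmax_dominated_general
    {Y : Type*} [DecidableEq Y]
    (d : ℕ) (φ : Y → Fin d → ℝ) (w : Fin d → ℝ)
    (y₀ : Y) (m : ℝ) (hm : 1 < m)
    (β : ℝ) (hβ : 0 < β) (hβle : β ≤ (∑ j, |w j|) / Real.log m)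
    (c : ℝ) (hc0 : 0 ≤ c)
    (n : ℕ) (hn : (n : ℝ) ≥ m ^ ((0.5 : ℝ) - c))
    {Ω : Type*} [MeasurableSpace Ω] (μ : Measure Ω) [IsProbabilityMeasure μ]
    (T : Ω → Finset Y)
    (hT : ∀ ω, y₀ ∉ T ω ∧ (T ω).card = n)
    (hmeas : Measurable fun ω =>
      exp ((∑ j, φ y₀ j * w j) / β) /
        ∑ y ∈ insert y₀ (T ω), exp ((∑ j, φ y j * w j) / β))
    (havg : μ {ω | (1 / (n : ℝ)) * ∑ y ∈ T ω, (∑ j, φ y j * w j)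
          ≥ (∑ j, φ y₀ j * w j) + c * ∑ j, |w j|}
        ≥ ENNReal.ofReal (1 - (∑ j, |w j|) / Real.sqrt m)) :
    (∫ ω, exp ((∑ j, φ y₀ j * w j) / β) /
        ∑ y ∈ insert y₀ (T ω), exp ((∑ j, φ y j * w j) / β) ∂μ)
      ≤ 1 / (1 + Real.sqrt m) + (∑ j, |w j|) / Real.sqrt m := by
  set s : Y → ℝ := fun y => ∑ j, φ y j * w j
  change ∫ ω, restrictedSoftmax s β (insert y₀ (T ω)) y₀ ∂μ ≤ _
  refine integral_le_add_of_le_on_of_measure_ge hmeas (fun _ => restrictedSoftmax_nonneg)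
    (fun _ => restrictedSoftmax_le_one (mem_insert_self _ _)) (by positivity) (by positivity)
    (fun ω hω => ?_) havg
  obtain ⟨hy₀, hcard⟩ := hT ω
  refine restrictedSoftmax_le_of_mean_ge hy₀ hm hβ hβle hc0 (by rwa [hcard]) ?_
  rw [hcard, ← one_div_mul_eq_div]
  exact hω

/-- **Case II of Lemma 3: expected restricted-softmax probability of a dominated
output.** Scores are `⟨φ(x,y), w⟩ = ∑ⱼ φ y j * w j` and `‖w‖₁ = ∑ⱼ |w j|`.
`T` is a random set of `n ≥ m^{0.5−c}` outputs from `Y∖{y₀}` whose average score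
exceeds the score of `y₀` by `c‖w‖₁` with probability at least `1 − ‖w‖₁/√m`;
then the expected restricted softmax probability of `y₀` on `T ∪ {y₀}` is at most
`1/(1+√m) + ‖w‖₁/√m`. -/
theorem expected_restricted_softmax_dominated
    {Y : Type*} [Fintype Y] [DecidableEq Y]
    (d : ℕ) (φ : Y → Fin d → ℝ) (w : Fin d → ℝ) (hw : w ≠ 0)
    (y₀ : Y) (m : ℝ) (hm : 1 < m)
    (β : ℝ) (hβ : 0 < β) (hβle : β ≤ (∑ j, |w j|) / Real.log m)
    (c : ℝ) (hc0 : 0 ≤ c) (hc1 : c ≤ 1)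
    (n : ℕ) (hn : (n : ℝ) ≥ m ^ ((0.5 : ℝ) - c))
    {Ω : Type*} [MeasurableSpace Ω] (μ : Measure Ω) [IsProbabilityMeasure μ]
    (T : Ω → Finset Y)
    (hT : ∀ ω, y₀ ∉ T ω ∧ (T ω).card = n)
    (hmeas : Measurable fun ω =>
      exp ((∑ j, φ y₀ j * w j) / β) /
        ∑ y ∈ insert y₀ (T ω), exp ((∑ j, φ y j * w j) / β))
    (havg : μ {ω | (1 / (n : ℝ)) * ∑ y ∈ T ω, (∑ j, φ y j * w j)
          ≥ (∑ j, φ y₀ j * w j) + c * ∑ j, |w j|}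
        ≥ ENNReal.ofReal (1 - (∑ j, |w j|) / Real.sqrt m)) :
    (∫ ω, exp ((∑ j, φ y₀ j * w j) / β) /
        ∑ y ∈ insert y₀ (T ω), exp ((∑ j, φ y j * w j) / β) ∂μ)
      ≤ 1 / (1 + Real.sqrt m) + (∑ j, |w j|) / Real.sqrt m :=
  expected_restricted_softmax_dominated_general d φ w y₀ m hm β hβ hβle c hc0 n hn μ T hT hmeas havg
end
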